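/- Let h: X → Y be a continuous orbit equivalence between one-sided shift spaces. Then h maps every nonisolated eventually periodic point of X to an eventually periodic point of Y. Moreover, if x = α^∞ is a periodic point of X with period p = |α| and k_X^{(p)}(x) = l_X^{(p)}(x), then x is an isolated point of X. -/

import Mathlib

/-!
Iterating the cocycle identity along a period `p` of a periodic point `x` gives
`σ^L(h w) = σ^K(h (σ^p w))`, where `K` and `L` are the Birkhoff sums of `k_X` and `l_X` over `p`
steps; both sums are locally constant. If `K ≠ L` at `x`, then `h x` is eventually periodic. If
`K = L = c`, the `c`-tail of `h` is `σ^p`-invariant on a cylinder around `x`. A point `z ≠ x` deep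
in that cylinder would then yield more than `|B|^c` images `h (σ^(s p) z)` with a common `c`-tail,
so two of them coincide. Injectivity of `h` then makes `σ^(s p) z` periodic, and its agreement with
`x` forces `z = x`. Hence `x` is isolated. A nonisolated eventually periodic point reduces to the
nonisolated periodic point in its forward orbit.
-/

open Function Set

/-- The shift map on one-sided sequences. -/
def shiftMap {A : Type*} : (ℕ → A) → (ℕ → A) := fun x n => x (n + 1)

/-- A one-sided shift space: a closed, shift-invariant subset of `A^ℕ`. -/
def IsShiftSpace {A : Type*} [TopologicalSpace A] (X : Set (ℕ → A)) : Prop :=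
  IsClosed X ∧ ∀ x ∈ X, shiftMap x ∈ X

/-- A point is eventually periodic if `σ^n(x) = σ^m(x)` for some `n ≠ m`. -/
def EventuallyPeriodic {A : Type*} (x : ℕ → A) : Prop :=
  ∃ p m : ℕ, 0 < p ∧ shiftMap^[m + p] x = shiftMap^[m] x

/-- `x` is an isolated point of `X`. -/
def IsolatedIn {A : Type*} [TopologicalSpace A] (X : Set (ℕ → A)) (x : ℕ → A) : Prop :=
  ∃ U : Set (ℕ → A), IsOpen U ∧ U ∩ X = {x}

open PiNat Topology

section Sequences

variable {A : Type*}

theorem shiftMap_iterate_apply (m : ℕ) (x : ℕ → A) (n : ℕ) :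
    shiftMap^[m] x n = x (n + m) := by
  induction m generalizing x with
  | zero => rfl
  | succ m ih => exact (ih (shiftMap x)).trans (congrArg x (by omega))

theorem iterate_shiftMap_mem_cylinder {x z : ℕ → A} {m n : ℕ} (hz : z ∈ cylinder x (n + m)) :
    shiftMap^[m] z ∈ cylinder (shiftMap^[m] x) n := fun i hi => by
  simpa only [shiftMap_iterate_apply] using hz (i + m) (by omega)

theorem iterate_shiftMap_mem_cylinder_of_isPeriodicPt {x z : ℕ → A} {m n : ℕ}
    (hx : IsPeriodicPt shiftMap m x) (hz : z ∈ cylinder x (n + m)) :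
    shiftMap^[m] z ∈ cylinder x n :=
  hx.eq ▸ iterate_shiftMap_mem_cylinder hz

theorem eq_of_mem_cylinder_of_iterate_shiftMap_eq {x z : ℕ → A} {m : ℕ}
    (hz : z ∈ cylinder x m) (h : shiftMap^[m] z = shiftMap^[m] x) : z = x := by
  funext n
  rcases lt_or_ge n m with hn | hn
  · exact hz n hn
  · simpa only [shiftMap_iterate_apply, Nat.sub_add_cancel hn] using congrFun h (n - m)

theorem eq_of_isPeriodicPt_shiftMap_of_mem_cylinder {x z : ℕ → A} {q : ℕ} (hq : 0 < q)
    (hz : IsPeriodicPt shiftMap q z) (hx : IsPeriodicPt shiftMap q x) (hzx : z ∈ cylinder x q) :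
    z = x := by
  funext n
  have hmod : ∀ u : ℕ → A, IsPeriodicPt shiftMap q u → u n = u (n % q) := fun u hu => by
    simpa only [shiftMap_iterate_apply, zero_add] using congrFun (hu.iterate_mod_apply n).symm 0
  rw [hmod z hz, hmod x hx]
  exact hzx _ (Nat.mod_lt n hq)

/-- `σ^(s p) z` is `(t - s) p`-periodic and agrees with `x` on a full period, hence equals `x`. -/
theorem eq_of_iterate_shiftMap_mul_eq {x z : ℕ → A} {p s t : ℕ} (hp : 0 < p)
    (hx : IsPeriodicPt shiftMap p x) (hst : s < t) (hz : z ∈ cylinder x (t * p))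
    (heq : shiftMap^[s * p] z = shiftMap^[t * p] z) : z = x := by
  have htp : (t - s) * p + s * p = t * p := by rw [← Nat.add_mul, Nat.sub_add_cancel hst.le]
  have hu_per : IsPeriodicPt shiftMap ((t - s) * p) (shiftMap^[s * p] z) := by
    rw [IsPeriodicPt, IsFixedPt, ← iterate_add_apply, htp, heq]
  have hu_mem : shiftMap^[s * p] z ∈ cylinder x ((t - s) * p) :=
    iterate_shiftMap_mem_cylinder_of_isPeriodicPt (hx.const_mul s) (htp ▸ hz)
  have hu : shiftMap^[s * p] z = x :=
    eq_of_isPeriodicPt_shiftMap_of_mem_cylinder (Nat.mul_pos (by omega) hp) hu_per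
      (hx.const_mul _) hu_mem
  refine eq_of_mem_cylinder_of_iterate_shiftMap_eq
    (cylinder_anti x (Nat.mul_le_mul_right p hst.le) hz) ?_
  rw [hu, (hx.const_mul s).eq]

theorem EventuallyPeriodic.of_iterate_shiftMap_eq {u v : ℕ → A} {a b : ℕ}
    (hv : EventuallyPeriodic v) (h : shiftMap^[a] u = shiftMap^[b] v) : EventuallyPeriodic u := by
  obtain ⟨p, m, hp, hvp⟩ := hv
  have hcomm : ∀ i j, shiftMap^[i] (shiftMap^[j] v) = shiftMap^[j] (shiftMap^[i] v) := fun i j =>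
    (Commute.iterate_iterate_self shiftMap i j).eq v
  refine ⟨p, m + a, hp, ?_⟩
  calc shiftMap^[m + a + p] u = shiftMap^[m + p] (shiftMap^[b] v) := by
        rw [add_right_comm, iterate_add_apply, h]
    _ = shiftMap^[m] (shiftMap^[a] u) := by rw [hcomm, hvp, h, hcomm]
    _ = shiftMap^[m + a] u := (iterate_add_apply _ _ _ _).symm

theorem eventuallyPeriodic_of_iterate_shiftMap_eq {u : ℕ → A} {a b : ℕ} (hab : a ≠ b)
    (h : shiftMap^[a] u = shiftMap^[b] u) : EventuallyPeriodic u := by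
  wlog hlt : a < b generalizing a b
  · exact this (Ne.symm hab) h.symm (by omega)
  exact ⟨b - a, a, by omega, by rw [Nat.add_sub_cancel' hlt.le, h]⟩

end Sequences

section Topology

theorem ContinuousOn.birkhoffSum {α M : Type*} [TopologicalSpace α] [TopologicalSpace M]
    [AddCommMonoid M] [ContinuousAdd M] {f : α → α} {g : α → M} {s : Set α} (hf : Continuous f)
    (hs : MapsTo f s s) (hg : ContinuousOn g s) (n : ℕ) : ContinuousOn (birkhoffSum f g n) s :=
  continuousOn_finsetSum _ fun k _ => hg.comp (hf.iterate k).continuousOn (hs.iterate k)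

theorem continuous_shiftMap {A : Type*} [TopologicalSpace A] :
    Continuous (shiftMap : (ℕ → A) → (ℕ → A)) :=
  continuous_pi fun n => continuous_apply (n + 1)

variable {A : Type*} [TopologicalSpace A] [DiscreteTopology A] {X : Set (ℕ → A)} {x : ℕ → A}

theorem exists_cylinder_subset_of_mem_nhds {U : Set (ℕ → A)} (hU : U ∈ 𝓝 x) :
    ∃ n, cylinder x n ⊆ U := by
  obtain ⟨_, ⟨y, n, rfl⟩, hx, hsub⟩ := ((isTopologicalBasis_cylinders _).mem_nhds_iff).1 hU
  exact ⟨n, (mem_cylinder_iff_eq.1 hx).symm ▸ hsub⟩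

theorem ContinuousOn.exists_cylinder_forall_eq {β : Type*} [TopologicalSpace β]
    [DiscreteTopology β] {f : (ℕ → A) → β} (hf : ContinuousOn f X) (hx : x ∈ X) :
    ∃ n, ∀ v ∈ X ∩ cylinder x n, f v = f x := by
  obtain ⟨U, hU, hUf⟩ := mem_nhdsWithin_iff_exists_mem_nhds_inter.1
    (hf x hx (isOpen_discrete {f x} |>.mem_nhds rfl))
  obtain ⟨n, hn⟩ := exists_cylinder_subset_of_mem_nhds hU
  exact ⟨n, fun v hv => hUf ⟨hn hv.2, hv.1⟩⟩

theorem isolatedIn_of_inter_cylinder_subset {n : ℕ} (hx : x ∈ X) (h : X ∩ cylinder x n ⊆ {x}) :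
    IsolatedIn X x :=
  ⟨cylinder x n, isOpen_cylinder _ x n, inter_comm X _ ▸
    Subset.antisymm h (singleton_subset_iff.2 ⟨hx, self_mem_cylinder x n⟩)⟩

theorem IsolatedIn.exists_inter_cylinder_subset (h : IsolatedIn X x) :
    ∃ n, X ∩ cylinder x n ⊆ {x} := by
  obtain ⟨U, hU, hUX⟩ := h
  have hxU : x ∈ U := (hUX.symm ▸ mem_singleton x : x ∈ U ∩ X).1
  obtain ⟨n, hn⟩ := exists_cylinder_subset_of_mem_nhds (hU.mem_nhds hxU)
  exact ⟨n, fun v hv => hUX ▸ ⟨hn hv.2, hv.1⟩⟩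

theorem IsolatedIn.of_iterate_shiftMap (hX : MapsTo shiftMap X X) (hx : x ∈ X) {m : ℕ}
    (h : IsolatedIn X (shiftMap^[m] x)) : IsolatedIn X x := by
  obtain ⟨n, hn⟩ := h.exists_inter_cylinder_subset
  refine isolatedIn_of_inter_cylinder_subset (n := n + m) hx fun z hz => ?_
  have hzm : shiftMap^[m] z = shiftMap^[m] x :=
    hn ⟨hX.iterate m hz.1, iterate_shiftMap_mem_cylinder hz.2⟩
  exact eq_of_mem_cylinder_of_iterate_shiftMap_eq (cylinder_anti x (by omega) hz.2) hzm

end Topology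

theorem iterate_cocycle {α β : Type*} {f : α → α} {T : β → β} {φ : α → β} {k l : α → ℕ}
    {X : Set α} (hX : MapsTo f X X) (hcoc : ∀ x ∈ X, T^[l x] (φ x) = T^[k x] (φ (f x)))
    (n : ℕ) {x : α} (hx : x ∈ X) :
    T^[birkhoffSum f l n x] (φ x) = T^[birkhoffSum f k n x] (φ (f^[n] x)) := by
  induction n generalizing x with
  | zero => rfl
  | succ n ih =>
    rw [birkhoffSum_succ', birkhoffSum_succ', add_comm, iterate_add_apply, hcoc x hx,
      ← iterate_add_apply, add_comm, iterate_add_apply, ih (hX hx), ← iterate_add_apply,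
      add_comm, iterate_succ_apply]

section Dynamics

variable {A B : Type*} {X : Set (ℕ → A)} {h : (ℕ → A) → (ℕ → B)} {x : ℕ → A} {p c M : ℕ}

theorem iterate_shiftMap_apply_iterate_mul_eq (hX : MapsTo shiftMap X X)
    (hx : IsPeriodicPt shiftMap p x)
    (hloc : ∀ w ∈ X ∩ cylinder x M, shiftMap^[c] (h w) = shiftMap^[c] (h (shiftMap^[p] w)))
    {z : ℕ → A} {S : ℕ} (hz : z ∈ X ∩ cylinder x (M + S * p)) {s : ℕ} (hs : s ≤ S) :
    shiftMap^[c] (h (shiftMap^[s * p] z)) = shiftMap^[c] (h z) := by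
  induction s with
  | zero => rw [zero_mul, iterate_zero_apply]
  | succ s ih =>
    have hzs : shiftMap^[s * p] z ∈ X ∩ cylinder x M :=
      ⟨hX.iterate _ hz.1, iterate_shiftMap_mem_cylinder_of_isPeriodicPt (hx.const_mul s)
        (cylinder_anti x (by nlinarith) hz.2)⟩
    rw [← ih (by omega), hloc _ hzs, ← iterate_add_apply, Nat.succ_mul, add_comm]

/-- Pigeonhole on the first `c` symbols of `h (σ^(s p) z)`, `s ≤ |B|^c`: two of these images share
both their prefix and their `c`-tail, so by injectivity `z` revisits itself along `σ^p`. -/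
theorem eq_of_mem_cylinder_of_forall_iterate_shiftMap_eq [Fintype B] (hX : MapsTo shiftMap X X)
    (hinj : InjOn h X) (hp : 0 < p) (hx : IsPeriodicPt shiftMap p x)
    (hloc : ∀ w ∈ X ∩ cylinder x M, shiftMap^[c] (h w) = shiftMap^[c] (h (shiftMap^[p] w)))
    {z : ℕ → A} (hz : z ∈ X ∩ cylinder x (M + Fintype.card (Fin c → B) * p)) : z = x := by
  set C := Fintype.card (Fin c → B)
  obtain ⟨s, t, hst, hprefix⟩ := Fintype.exists_ne_map_eq_of_card_lt
    (fun s : Fin (C + 1) => fun i : Fin c => h (shiftMap^[s * p] z) i) (by simp [C])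
  have hmem : ∀ s : Fin (C + 1), shiftMap^[s * p] z ∈ X := fun s => hX.iterate _ hz.1
  have htail : ∀ s : Fin (C + 1),
      shiftMap^[c] (h (shiftMap^[s * p] z)) = shiftMap^[c] (h z) := fun s =>
    iterate_shiftMap_apply_iterate_mul_eq hX hx hloc hz (Nat.lt_succ_iff.1 s.2)
  have heq : shiftMap^[s * p] z = shiftMap^[t * p] z := by
    exact hinj (hmem s) (hmem t) (eq_of_mem_cylinder_of_iterate_shiftMap_eq (m := c)
      (fun i hi => congrFun hprefix ⟨i, hi⟩) ((htail s).trans (htail t).symm))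
  have hcyl : ∀ r : Fin (C + 1), z ∈ cylinder x (r * p) := fun r =>
    cylinder_anti x (by nlinarith [Nat.lt_succ_iff.1 r.2]) hz.2
  rcases Fin.val_injective.ne hst |>.lt_or_gt with hlt | hlt
  · exact eq_of_iterate_shiftMap_mul_eq hp hx hlt (hcyl t) heq
  · exact eq_of_iterate_shiftMap_mul_eq hp hx hlt (hcyl s) heq.symm

theorem eventuallyPeriodic_of_birkhoffSum_ne {k l : (ℕ → A) → ℕ} (hX : MapsTo shiftMap X X)
    (hcoc : ∀ x ∈ X, shiftMap^[l x] (h x) = shiftMap^[k x] (h (shiftMap x)))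
    (hx : x ∈ X) (hper : IsPeriodicPt shiftMap p x)
    (hne : birkhoffSum shiftMap k p x ≠ birkhoffSum shiftMap l p x) : EventuallyPeriodic (h x) := by
  have hcyc := iterate_cocycle hX hcoc p hx
  rw [hper.eq] at hcyc
  exact eventuallyPeriodic_of_iterate_shiftMap_eq hne.symm hcyc

variable [TopologicalSpace A] [DiscreteTopology A] {k l : (ℕ → A) → ℕ}

/-- Near `x` both Birkhoff sums are constant, so their equality at `x` makes the `c`-tail of `h`
invariant under `σ^p` on a whole cylinder around `x`. -/
theorem isolatedIn_of_birkhoffSum_eq [Fintype B] (hX : MapsTo shiftMap X X) (hinj : InjOn h X)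
    (hk : ContinuousOn k X) (hl : ContinuousOn l X)
    (hcoc : ∀ x ∈ X, shiftMap^[l x] (h x) = shiftMap^[k x] (h (shiftMap x)))
    (hx : x ∈ X) (hp : 0 < p) (hper : IsPeriodicPt shiftMap p x)
    (hsum : birkhoffSum shiftMap k p x = birkhoffSum shiftMap l p x) : IsolatedIn X x := by
  obtain ⟨Mk, hMk⟩ := (hk.birkhoffSum continuous_shiftMap hX p).exists_cylinder_forall_eq hx
  obtain ⟨Ml, hMl⟩ := (hl.birkhoffSum continuous_shiftMap hX p).exists_cylinder_forall_eq hx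
  have hloc : ∀ w ∈ X ∩ cylinder x (max Mk Ml), shiftMap^[birkhoffSum shiftMap l p x] (h w) =
      shiftMap^[birkhoffSum shiftMap l p x] (h (shiftMap^[p] w)) := fun w hw => by
    have hwk := hMk w ⟨hw.1, cylinder_anti x (le_max_left _ _) hw.2⟩
    have hwl := hMl w ⟨hw.1, cylinder_anti x (le_max_right _ _) hw.2⟩
    rw [← hwl, iterate_cocycle hX hcoc p hw.1, hwk, hsum, hwl]
  exact isolatedIn_of_inter_cylinder_subset hx fun z hz =>
    eq_of_mem_cylinder_of_forall_iterate_shiftMap_eq hX hinj hp hper hloc hz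

end Dynamics

theorem coe_maps_nonisolated_eventuallyPeriodic_general {A B : Type*}
    [TopologicalSpace A] [DiscreteTopology A] [Fintype B]
    (X : Set (ℕ → A))
    (hX : IsShiftSpace X)
    (h : (ℕ → A) → (ℕ → B)) (h' : (ℕ → B) → (ℕ → A))
    (kX lX : (ℕ → A) → ℕ)
    (hleft : ∀ x ∈ X, h' (h x) = x)
    (hkXc : ContinuousOn kX X) (hlXc : ContinuousOn lX X)
    (hcocX : ∀ x ∈ X, shiftMap^[lX x] (h x) = shiftMap^[kX x] (h (shiftMap x))) :
    (∀ x ∈ X, EventuallyPeriodic x → ¬ IsolatedIn X x → EventuallyPeriodic (h x)) ∧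
      (∀ x ∈ X, ∀ p : ℕ, 0 < p → shiftMap^[p] x = x →
        (∑ i ∈ Finset.range p, kX (shiftMap^[i] x)) =
          (∑ i ∈ Finset.range p, lX (shiftMap^[i] x)) →
        IsolatedIn X x) := by
  have hinj : InjOn h X := LeftInvOn.injOn hleft
  refine ⟨fun x hx ⟨p, m, hp, hper⟩ hniso => ?_, fun x hx p hp hper hsum =>
    isolatedIn_of_birkhoffSum_eq hX.2 hinj hkXc hlXc hcocX hx hp hper hsum⟩
  have hz : shiftMap^[m] x ∈ X := MapsTo.iterate hX.2 m hx
  have hzper : IsPeriodicPt shiftMap p (shiftMap^[m] x) := by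
    rwa [IsPeriodicPt, IsFixedPt, ← iterate_add_apply, add_comm]
  have hne :
      birkhoffSum shiftMap kX p (shiftMap^[m] x) ≠ birkhoffSum shiftMap lX p (shiftMap^[m] x) :=
    fun hsum => hniso <| IsolatedIn.of_iterate_shiftMap hX.2 hx <|
      isolatedIn_of_birkhoffSum_eq hX.2 hinj hkXc hlXc hcocX hz hp hzper hsum
  exact (eventuallyPeriodic_of_birkhoffSum_ne hX.2 hcocX hz hzper hne).of_iterate_shiftMap_eq
    (iterate_cocycle hX.2 hcocX m hx)

/-- A continuous orbit equivalence `h : X → Y` maps every nonisolated eventually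
periodic point to an eventually periodic point; moreover, if `x` is a periodic point
with period `p` and `k_X^{(p)}(x) = l_X^{(p)}(x)`, then `x` is isolated. -/
theorem coe_maps_nonisolated_eventuallyPeriodic {A B : Type*} [Fintype A]
    [TopologicalSpace A] [DiscreteTopology A] [Fintype B] [TopologicalSpace B]
    [DiscreteTopology B]
    (X : Set (ℕ → A)) (Y : Set (ℕ → B))
    (hX : IsShiftSpace X) (hY : IsShiftSpace Y)
    (h : (ℕ → A) → (ℕ → B)) (h' : (ℕ → B) → (ℕ → A))
    (kX lX : (ℕ → A) → ℕ) (kY lY : (ℕ → B) → ℕ)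
    (hm : MapsTo h X Y) (hm' : MapsTo h' Y X)
    (hleft : ∀ x ∈ X, h' (h x) = x) (hright : ∀ y ∈ Y, h (h' y) = y)
    (hc : ContinuousOn h X) (hc' : ContinuousOn h' Y)
    (hkXc : ContinuousOn kX X) (hlXc : ContinuousOn lX X)
    (hkYc : ContinuousOn kY Y) (hlYc : ContinuousOn lY Y)
    (hcocX : ∀ x ∈ X, shiftMap^[lX x] (h x) = shiftMap^[kX x] (h (shiftMap x)))
    (hcocY : ∀ y ∈ Y, shiftMap^[lY y] (h' y) = shiftMap^[kY y] (h' (shiftMap y))) :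
    (∀ x ∈ X, EventuallyPeriodic x → ¬ IsolatedIn X x → EventuallyPeriodic (h x)) ∧
      (∀ x ∈ X, ∀ p : ℕ, 0 < p → shiftMap^[p] x = x →
        (∑ i ∈ Finset.range p, kX (shiftMap^[i] x)) =
          (∑ i ∈ Finset.range p, lX (shiftMap^[i] x)) →
        IsolatedIn X x) :=
  coe_maps_nonisolated_eventuallyPeriodic_general X hX h h' kX lX hleft hkXc hlXc hcocX
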